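/- Suppose a hyperbolic group G acts by isometries on a hyperbolic metric space X and the action is properly discontinuous. Suppose x ∈ X and the orbit map h: G → X given by h(g) = g·x admits a Cannon–Thurston map ∂h: ∂G → ∂X. If h is not a quasi-isometric embedding, then there are points ξ₁ ≠ ξ₂ in ∂G such that ∂h(ξ₁) = ∂h(ξ₂). In particular, if H is a hyperbolic subgroup of a hyperbolic group G, the inclusion H → G admits a CT map, and H is not quasi-isometrically embedded in G, then the CT map ∂H → ∂G is not injective. -/

import Mathlib

/-! ### Core coarse-geometric definitions
Gromov products, hyperbolicity, Gromov boundaries, Cannon–Thurston maps,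
word metrics, quasi-isometric embeddings, laminations. -/

/-- The Gromov product of `x` and `y` with respect to the basepoint `o`,
for a distance function `d`. -/
noncomputable def gprod {X : Type*} (d : X → X → ℝ) (o x y : X) : ℝ :=
  (d x o + d y o - d x y) / 2

/-- A distance function is (Gromov) hyperbolic: the four point condition. -/
def IsHypD {X : Type*} (d : X → X → ℝ) : Prop :=
  ∃ δ : ℝ, 0 ≤ δ ∧ ∀ o x y z : X,
    min (gprod d o x y) (gprod d o y z) ≤ gprod d o x z + δ

/-- A sequence tends to infinity if its Gromov products tend to infinity. -/
def SeqToInf {X : Type*} (d : X → X → ℝ) (s : ℕ → X) : Prop :=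
  ∀ (o : X) (M : ℝ), ∃ N : ℕ, ∀ m n : ℕ, N ≤ m → N ≤ n → M ≤ gprod d o (s m) (s n)

/-- Two sequences tending to infinity determine the same boundary point. -/
def SeqFellow {X : Type*} (d : X → X → ℝ) (s t : ℕ → X) : Prop :=
  ∀ (o : X) (M : ℝ), ∃ N : ℕ, ∀ m n : ℕ, N ≤ m → N ≤ n → M ≤ gprod d o (s m) (t n)

/-- Sequences in `X` tending to infinity. -/
def BdryPre {X : Type*} (d : X → X → ℝ) : Type _ := { s : ℕ → X // SeqToInf d s }

/-- The (sequential model of the) Gromov boundary of `(X, d)`. -/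
def Bdry {X : Type*} (d : X → X → ℝ) : Type _ :=
  Quot fun s t : BdryPre d => SeqFellow d s.1 t.1

/-- The boundary point represented by a sequence tending to infinity. -/
def Bdry.mk {X : Type*} {d : X → X → ℝ} (s : BdryPre d) : Bdry d := Quot.mk _ s

/-- A sequence in `X` converges to the boundary point `ξ`. -/
def ConvTo {X : Type*} (d : X → X → ℝ) (s : ℕ → X) (ξ : Bdry d) : Prop :=
  ∃ h : SeqToInf d s, Bdry.mk ⟨s, h⟩ = ξ

/-- The visual topology on the Gromov boundary. -/
noncomputable instance bdryTopology {X : Type*} (d : X → X → ℝ) :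
    TopologicalSpace (Bdry d) :=
  TopologicalSpace.generateFrom
    { U | ∃ (o : X) (M : ℝ) (s : BdryPre d),
        U = { η | ∃ t : BdryPre d, Bdry.mk t = η ∧
          ∀ m n : ℕ, M ≤ gprod d o (s.1 m) (t.1 n) } }

/-- `g` is a Cannon–Thurston map for `f : (Y,dY) → (X,dX)`: it is continuous and,
whenever a sequence in `Y` converges to a boundary point `ξ`, the image sequence
converges to `g ξ`. -/
def IsCTMapD {Y X : Type*} (dY : Y → Y → ℝ) (dX : X → X → ℝ)
    (f : Y → X) (g : Bdry dY → Bdry dX) : Prop :=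
  Continuous g ∧
    ∀ (s : ℕ → Y) (ξ : Bdry dY), ConvTo dY s ξ → ConvTo dX (fun n => f (s n)) (g ξ)

/-- `f : (Y,dY) → (X,dX)` admits a Cannon–Thurston map. -/
def AdmitsCT {Y X : Type*} (dY : Y → Y → ℝ) (dX : X → X → ℝ) (f : Y → X) : Prop :=
  ∃ g, IsCTMapD dY dX f g

/-- The limit set of `A ⊆ X` in the Gromov boundary of `(X,d)`. -/
def limitSetD {X : Type*} (d : X → X → ℝ) (A : Set X) : Set (Bdry d) :=
  { ξ | ∃ s : ℕ → X, (∀ n, s n ∈ A) ∧ ConvTo d s ξ }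

/-- Quasi-isometric embedding with multiplicative/additive constant `k`. -/
def IsQIEmbWith {Y X : Type*} (dY : Y → Y → ℝ) (dX : X → X → ℝ) (k : ℝ) (f : Y → X) : Prop :=
  ∀ y y' : Y, dY y y' / k - k ≤ dX (f y) (f y') ∧ dX (f y) (f y') ≤ k * dY y y' + k

/-- Quasi-isometric embedding. -/
def IsQIEmbD {Y X : Type*} (dY : Y → Y → ℝ) (dX : X → X → ℝ) (f : Y → X) : Prop :=
  ∃ k : ℝ, 1 ≤ k ∧ IsQIEmbWith dY dX k f

/-- `A` is contained in a finite (`d`-)neighborhood of `B`. -/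
def InFiniteNbhd {X : Type*} (d : X → X → ℝ) (A B : Set X) : Prop :=
  ∃ D : ℝ, ∀ a ∈ A, ∃ b ∈ B, d a b ≤ D

/-- The word length of `g` with respect to `S` (inverses of generators allowed). -/
noncomputable def wordLength {G : Type*} [Group G] (S : Set G) (g : G) : ℕ :=
  sInf { n : ℕ | ∃ l : List G, (∀ x ∈ l, x ∈ S ∨ x⁻¹ ∈ S) ∧ l.length = n ∧ l.prod = g }

/-- The word metric on `G` with respect to `S`. -/
noncomputable def wordDist {G : Type*} [Group G] (S : Set G) (g h : G) : ℝ :=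
  wordLength S (g⁻¹ * h)

/-- `S` is a finite generating set of `G`. -/
def GenSet {G : Type*} [Group G] (S : Set G) : Prop :=
  S.Finite ∧ Subgroup.closure S = ⊤

/-- A finitely generated group is hyperbolic if some (equivalently, any) of its
word metrics with respect to a finite generating set is Gromov hyperbolic. -/
def IsHypGroup (G : Type*) [Group G] : Prop :=
  ∃ S : Set G, GenSet S ∧ IsHypD (wordDist S)

/-- The standard distance on `ℤ` (to parametrize (quasi)geodesic lines). -/
noncomputable def zdist : ℤ → ℤ → ℝ := fun m n => |(m : ℝ) - (n : ℝ)|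

/-- A quasigeodesic line in `(Y,dY)`. -/
def IsQGLine {Y : Type*} (dY : Y → Y → ℝ) (α : ℤ → Y) : Prop :=
  IsQIEmbD zdist dY α

/-- `α` is a leaf of the Cannon–Thurston lamination of `f`, whose CT map is `g`:
a quasigeodesic line whose two distinct endpoints at infinity are identified by `g`. -/
def IsLeafD {Y X : Type*} (dY : Y → Y → ℝ) (dX : X → X → ℝ)
    (f : Y → X) (g : Bdry dY → Bdry dX) (α : ℤ → Y) : Prop :=
  IsQGLine dY α ∧
  ∃ ξp ξm : Bdry dY,
    ConvTo dY (fun n : ℕ => α (n : ℤ)) ξp ∧ ConvTo dY (fun n : ℕ => α (-(n : ℤ))) ξm ∧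
    ξp ≠ ξm ∧ g ξp = g ξm

/-- A finitely generated subgroup `H ≤ G` is qi embedded (= quasiconvex when `G` is
hyperbolic, = undistorted): the inclusion is a quasi-isometric embedding for word
metrics coming from finite generating sets (this does not depend on the choices). -/
def QIEmbSubgroup {G : Type*} [Group G] (H : Subgroup G) : Prop :=
  ∃ (S : Set G) (T : Set ↥H), GenSet S ∧ GenSet T ∧
    IsQIEmbD (wordDist T) (wordDist S) (Subtype.val : ↥H → G)

/-- A group is virtually cyclic (elementary). -/
def VirtCyclic (G : Type*) [Group G] : Prop :=
  ∃ H : Subgroup G, (∃ g : G, H = Subgroup.zpowers g) ∧ H.index ≠ 0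

/-- A geodesic metric space. -/
def IsGeodesicMS (X : Type*) [MetricSpace X] : Prop :=
  ∀ x y : X, ∃ γ : ℝ → X, γ 0 = x ∧ γ (dist x y) = y ∧
    ∀ s ∈ Set.Icc (0:ℝ) (dist x y), ∀ t ∈ Set.Icc (0:ℝ) (dist x y),
      dist (γ s) (γ t) = |s - t|

open Pointwise


/-! If the orbit map is not a quasi-isometric embedding, there are elements `g` whose word
length is much larger than `d(x, g • x)`. A unit-step chain from `x` to `g • x` in `X` is then too
short to shadow a word geodesic from `1` to `g`: by proper discontinuity, some point `p` of the
word geodesic has its orbit point far from the chain. Translating by `p⁻¹` gives `b, c ∈ G` with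
`(b · c)_1 = 0` in `G` but `(b • x · c • x)_x` large in `X`. Letting this gap grow and extracting,
by finiteness of balls in `G`, a subsequence along which the geodesic prefixes of `b` and `c`
stabilize, `b` and `c` converge to distinct points of `∂G` whose images under the
Cannon–Thurston map coincide.

Only unit-step chains in `X` are used, so the same argument applies to `H` acting on `G` with its
word metric. -/

structure IsPseudoDist {X : Type*} (d : X → X → ℝ) : Prop where
  self : ∀ x, d x x = 0
  comm : ∀ x y, d x y = d y x
  triangle : ∀ x y z, d x z ≤ d x y + d y z

lemma IsPseudoDist.nonneg {X : Type*} {d : X → X → ℝ} (hd : IsPseudoDist d) (x y : X) :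
    0 ≤ d x y := by
  have := hd.triangle x y x
  rw [hd.self, hd.comm y x] at this
  linarith

def IsChainGeodesic {X : Type*} (d : X → X → ℝ) : Prop :=
  ∀ u v : X, ∃ (L : ℕ) (c : ℕ → X), c 0 = u ∧ c L = v ∧ (L : ℝ) ≤ d u v + 1 ∧
    ∀ i j, i ≤ j → j ≤ L → d (c i) (c j) ≤ j - i

lemma isPseudoDist_dist (X : Type*) [PseudoMetricSpace X] :
    IsPseudoDist (fun a b : X => dist a b) :=
  ⟨dist_self, dist_comm, dist_triangle⟩

section WordMetric

variable {G : Type*} [Group G] {S : Set G}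

def IsWord (S : Set G) (l : List G) : Prop := ∀ x ∈ l, x ∈ S ∨ x⁻¹ ∈ S

lemma IsWord.append {l l' : List G} (hl : IsWord S l) (hl' : IsWord S l') :
    IsWord S (l ++ l') := by
  intro x hx
  rcases List.mem_append.1 hx with h | h
  exacts [hl x h, hl' x h]

lemma IsWord.reverse_map_inv {l : List G} (hl : IsWord S l) :
    IsWord S (l.map (·⁻¹)).reverse := by
  intro x hx
  obtain ⟨a, ha, rfl⟩ := List.mem_map.1 (List.mem_reverse.1 hx)
  simpa [or_comm] using hl a ha

lemma IsWord.subset {l l' : List G} (hl : IsWord S l) (h : l' ⊆ l) : IsWord S l' :=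
  fun x hx => hl x (h hx)

lemma exists_isWord_prod_eq (hS : Subgroup.closure S = ⊤) (g : G) :
    ∃ l : List G, IsWord S l ∧ l.prod = g := by
  have hg : g ∈ (Subgroup.closure S).toSubmonoid := by simp [hS]
  rw [Subgroup.closure_toSubmonoid] at hg
  exact Submonoid.exists_list_of_mem_closure hg

lemma exists_isWord_length_eq_wordLength (hS : Subgroup.closure S = ⊤) (g : G) :
    ∃ l : List G, IsWord S l ∧ l.length = wordLength S g ∧ l.prod = g :=
  have ⟨l, hl, hprod⟩ := exists_isWord_prod_eq hS g
  Nat.sInf_mem (s := {n | ∃ l : List G, IsWord S l ∧ l.length = n ∧ l.prod = g})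
    ⟨l.length, l, hl, rfl, hprod⟩

lemma wordLength_prod_le {l : List G} (hl : IsWord S l) : wordLength S l.prod ≤ l.length :=
  Nat.sInf_le ⟨l, hl, rfl, rfl⟩

lemma wordLength_mul_le (hS : Subgroup.closure S = ⊤) (g h : G) :
    wordLength S (g * h) ≤ wordLength S g + wordLength S h := by
  obtain ⟨l, hl, hlen, rfl⟩ := exists_isWord_length_eq_wordLength hS g
  obtain ⟨l', hl', hlen', rfl⟩ := exists_isWord_length_eq_wordLength hS h
  simpa [hlen, hlen'] using wordLength_prod_le (hl.append hl')

lemma wordLength_inv_le (hS : Subgroup.closure S = ⊤) (g : G) :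
    wordLength S g⁻¹ ≤ wordLength S g := by
  obtain ⟨l, hl, hlen, rfl⟩ := exists_isWord_length_eq_wordLength hS g
  simpa [hlen, List.prod_inv_reverse] using wordLength_prod_le hl.reverse_map_inv

lemma wordLength_inv (hS : Subgroup.closure S = ⊤) (g : G) :
    wordLength S g⁻¹ = wordLength S g :=
  (wordLength_inv_le hS g).antisymm (by simpa using wordLength_inv_le hS g⁻¹)

lemma finite_setOf_wordLength_le (hfin : S.Finite) (hS : Subgroup.closure S = ⊤) (r : ℕ) :
    {g : G | wordLength S g ≤ r}.Finite := by
  have := (hfin.union hfin.inv).to_subtype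
  refine (((List.finite_length_le (S ∪ S⁻¹ : Set G) r).image
    (List.map Subtype.val)).image List.prod).subset ?_
  intro g hg
  obtain ⟨l, hl, hlen, rfl⟩ := exists_isWord_length_eq_wordLength hS g
  have hl' : ∀ x ∈ l, x ∈ S ∪ S⁻¹ := hl
  refine ⟨_, ⟨l.pmap Subtype.mk hl', ?_, by simp [List.map_pmap]⟩, rfl⟩
  simpa [hlen] using hg

lemma wordDist_one_left (g : G) : wordDist S 1 g = wordLength S g := by
  simp [wordDist]

lemma wordDist_mul_left (k g h : G) : wordDist S (k * g) (k * h) = wordDist S g h := by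
  simp [wordDist, mul_assoc]

lemma isPseudoDist_wordDist (hS : Subgroup.closure S = ⊤) : IsPseudoDist (wordDist S) where
  self g := by
    simpa [wordDist] using wordLength_prod_le (S := S) (l := []) (by simp [IsWord])
  comm g h := by
    rw [wordDist, wordDist, ← wordLength_inv hS]
    simp
  triangle g h k := by
    have := wordLength_mul_le hS (g⁻¹ * h) (h⁻¹ * k)
    simp only [mul_assoc, mul_inv_cancel_left] at this
    unfold wordDist
    exact_mod_cast this

end WordMetric

section GeodesicPath

variable {G : Type*} [Group G] {S : Set G}

structure IsGeodesicPath (S : Set G) (g : G) (γ : ℕ → G) : Prop where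
  zero : γ 0 = 1
  eq_of_le : ∀ i, wordLength S g ≤ i → γ i = g
  wordDist_eq : ∀ i j, i ≤ j → j ≤ wordLength S g → wordDist S (γ i) (γ j) = j - i

lemma wordDist_take_prod_le {l : List G} (hl : IsWord S l) {i j : ℕ} (hij : i ≤ j) :
    wordDist S (l.take i).prod (l.take j).prod ≤ j - i := by
  have hsplit : (l.take i).prod * ((l.take j).drop i).prod = (l.take j).prod := by
    have htake : l.take i ++ (l.take j).drop i = l.take j := by
      conv_rhs => rw [← List.take_append_drop i (l.take j)]
      rw [List.take_take, min_eq_left hij]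
    rw [← List.prod_append, htake]
  have hlen : ((l.take j).drop i).length ≤ j - i := by
    rw [List.length_drop, List.length_take]; omega
  have := (wordLength_prod_le (hl.subset fun _ hx =>
    List.mem_of_mem_take (List.mem_of_mem_drop hx))).trans hlen
  rw [wordDist, ← eq_inv_mul_of_mul_eq hsplit, ← Nat.cast_sub hij]
  exact_mod_cast this

lemma exists_isGeodesicPath (hS : Subgroup.closure S = ⊤) (g : G) :
    ∃ γ, IsGeodesicPath S g γ := by
  obtain ⟨l, hl, hlen, hprod⟩ := exists_isWord_length_eq_wordLength hS g
  refine ⟨fun i => (l.take i).prod, by simp, fun i hi => ?_, fun i j hij hj => ?_⟩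
  · rw [List.take_of_length_le (hlen ▸ hi), hprod]
  · have hd := isPseudoDist_wordDist hS
    have hn : wordDist S (l.take 0).prod (l.take l.length).prod = l.length := by
      rw [List.take_zero, List.take_length, hprod]
      simp [wordDist_one_left, hlen]
    linarith [hd.triangle (l.take 0).prod (l.take i).prod (l.take l.length).prod,
      hd.triangle (l.take i).prod (l.take j).prod (l.take l.length).prod,
      wordDist_take_prod_le hl (Nat.zero_le i), wordDist_take_prod_le hl hij,
      wordDist_take_prod_le hl (hlen ▸ hj : j ≤ l.length)]

namespace IsGeodesicPath

variable {g : G} {γ : ℕ → G}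

lemma apply_wordLength (hγ : IsGeodesicPath S g γ) : γ (wordLength S g) = g :=
  hγ.eq_of_le _ le_rfl

lemma wordLength_apply (hγ : IsGeodesicPath S g γ) {i : ℕ} (hi : i ≤ wordLength S g) :
    wordLength S (γ i) = i := by
  have := hγ.wordDist_eq 0 i (Nat.zero_le i) hi
  rw [hγ.zero, wordDist_one_left] at this
  simpa using this

lemma wordLength_apply_le (hγ : IsGeodesicPath S g γ) (i : ℕ) : wordLength S (γ i) ≤ i := by
  rcases le_total i (wordLength S g) with hi | hi
  · exact (hγ.wordLength_apply hi).le
  · rwa [hγ.eq_of_le i hi]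

end IsGeodesicPath

end GeodesicPath

section GromovProduct

variable {X : Type*} {d : X → X → ℝ}

lemma gprod_comm (hd : IsPseudoDist d) (o x y : X) : gprod d o x y = gprod d o y x := by
  unfold gprod; rw [hd.comm x y]; ring

lemma gprod_sub_dist_le (hd : IsPseudoDist d) (o p x y : X) :
    gprod d p x y - d p o ≤ gprod d o x y := by
  unfold gprod
  linarith [hd.triangle x o p, hd.triangle y o p, hd.comm o p]

lemma le_gprod_of_dist_add_le (hd : IsPseudoDist d) {o p x y : X}
    (hx : d o p + d p x ≤ d o x) (hy : d o p + d p y ≤ d o y) : d o p ≤ gprod d o x y := by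
  unfold gprod
  linarith [hd.triangle x p y, hd.comm x p, hd.comm x o, hd.comm y o]

lemma seqFellow_of_basepoint (hd : IsPseudoDist d) {s t : ℕ → X} (o₀ : X)
    (h : ∀ M : ℝ, ∃ N, ∀ m n, N ≤ m → N ≤ n → M ≤ gprod d o₀ (s m) (t n)) :
    SeqFellow d s t := by
  intro o M
  obtain ⟨N, hN⟩ := h (M + d o₀ o)
  exact ⟨N, fun m n hm hn => by linarith [hN m n hm hn, gprod_sub_dist_le hd o o₀ (s m) (t n)]⟩

lemma SeqFellow.symm (hd : IsPseudoDist d) {s t : ℕ → X} (h : SeqFellow d s t) :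
    SeqFellow d t s := by
  intro o M
  obtain ⟨N, hN⟩ := h o M
  exact ⟨N, fun m n hm hn => gprod_comm hd o (t m) (s n) ▸ hN n m hn hm⟩

lemma SeqFellow.trans (hhyp : IsHypD d) {s t u : ℕ → X} (hst : SeqFellow d s t)
    (htu : SeqFellow d t u) : SeqFellow d s u := by
  obtain ⟨δ, -, hδ⟩ := hhyp
  intro o M
  obtain ⟨N₁, hN₁⟩ := hst o (M + δ)
  obtain ⟨N₂, hN₂⟩ := htu o (M + δ)
  refine ⟨max N₁ N₂, fun m n hm hn => ?_⟩
  have h1 := hN₁ m (max N₁ N₂) (le_of_max_le_left hm) (le_max_left _ _)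
  have h2 := hN₂ (max N₁ N₂) n (le_max_right _ _) (le_of_max_le_right hn)
  linarith [(le_min h1 h2).trans (hδ o (s m) (t (max N₁ N₂)) (u n))]

lemma seqFellow_of_mk_eq (hd : IsPseudoDist d) (hhyp : IsHypD d) {s t : BdryPre d}
    (h : Bdry.mk s = Bdry.mk t) : SeqFellow d s.1 t.1 := by
  have h' := Quot.eqvGen_exact h
  clear h
  induction h' with
  | rel _ _ h => exact h
  | refl s => exact s.2
  | symm _ _ _ ih => exact ih.symm hd
  | trans _ _ _ _ _ ih₁ ih₂ => exact ih₁.trans hhyp ih₂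

lemma seqFellow_of_le_gprod (hd : IsPseudoDist d) (hhyp : IsHypD d) {s t : ℕ → X}
    (hs : SeqToInf d s) (o : X) (h : ∀ n : ℕ, (n : ℝ) ≤ gprod d o (s n) (t n)) :
    SeqFellow d s t := by
  obtain ⟨δ, -, hδ⟩ := hhyp
  refine seqFellow_of_basepoint hd o fun M => ?_
  obtain ⟨N, hN⟩ := hs o (M + δ)
  refine ⟨max N ⌈M + δ⌉₊, fun m n hm hn => ?_⟩
  have h1 := hN m n (le_of_max_le_left hm) (le_of_max_le_left hn)
  have h2 : M + δ ≤ gprod d o (s n) (t n) :=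
    (Nat.le_ceil _).trans ((Nat.cast_le.2 (le_of_max_le_right hn)).trans (h n))
  linarith [(le_min h1 h2).trans (hδ o (s m) (s n) (t n))]

lemma exists_pos_nonpos_succ {u : ℕ → ℝ} {L : ℕ} (h0 : 0 < u 0) (hL : u L ≤ 0) :
    ∃ i < L, 0 < u i ∧ u (i + 1) ≤ 0 := by
  induction L with
  | zero => exact absurd hL h0.not_ge
  | succ L ih =>
    by_cases hu : u L ≤ 0
    · obtain ⟨i, hi, h⟩ := ih hu
      exact ⟨i, hi.trans (Nat.lt_succ_self L), h⟩
    · exact ⟨L, Nat.lt_succ_self L, not_le.1 hu, hL⟩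

lemma sub_le_gprod_of_le_dist_chain (hd : IsPseudoDist d) {δ : ℝ}
    (hδ : ∀ o x y z : X, min (gprod d o x y) (gprod d o y z) ≤ gprod d o x z + δ)
    {c : ℕ → X} {L : ℕ} {u v z : X} {D : ℝ} (hc0 : c 0 = u) (hcL : c L = v)
    (hL : (L : ℝ) ≤ d u v + 1) (hc : ∀ i j, i ≤ j → j ≤ L → d (c i) (c j) ≤ j - i)
    (hfar : ∀ j ≤ L, D ≤ d z (c j)) :
    D - 2 * δ - 3 ≤ gprod d z u v := by
  by_contra! hP
  have hδ0 : 0 ≤ δ := by simpa [gprod, hd.self] using hδ z z z z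
  have hz : ∀ j ≤ L, D ≤ d (c j) z := fun j hj => hd.comm z (c j) ▸ hfar j hj
  -- `i` is where the chain passes from the side of `u` to the side of `v`, as seen from `z`
  obtain ⟨i, hiL, hpos, hneg⟩ := exists_pos_nonpos_succ
    (u := fun i => gprod d z u (c i) - gprod d z (c i) v) (L := L)
    (by have := hz 0 (Nat.zero_le L); simp only [hc0, gprod, hd.self] at *; linarith)
    (by have := hz L le_rfl; simp only [hcL, gprod, hd.self] at *; linarith)
  have h4 := hδ z u (c i) v
  rw [min_eq_right (by linarith)] at h4
  have hstep := hc i (i + 1) (Nat.le_succ i) hiL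
  have hui := hc 0 i (Nat.zero_le i) hiL.le
  have hiv := hc i L hiL.le le_rfl
  have hzi := hz i hiL.le
  rw [hc0] at hui
  rw [hcL] at hiv
  push_cast at *
  simp only [gprod] at *
  linarith [hd.triangle (c i) (c (i + 1)) z, hd.triangle u (c i) (c (i + 1)),
    hd.triangle (c (i + 1)) (c i) z, hd.triangle (c i) (c (i + 1)) v, hd.comm (c i) (c (i + 1))]

end GromovProduct

section EquivariantMap

variable {G : Type*} [Group G] {S : Set G} {X : Type*} {d : X → X → ℝ} {f : G → X}

lemma dist_map_one_map_inv_mul (hf : ∀ k g h, d (f (k * g)) (f (k * h)) = d (f g) (f h))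
    (a b : G) : d (f 1) (f (a⁻¹ * b)) = d (f a) (f b) := by
  simpa using (hf a 1 (a⁻¹ * b)).symm

lemma gprod_map_mul_left (hf : ∀ k g h, d (f (k * g)) (f (k * h)) = d (f g) (f h))
    (k a b c : G) :
    gprod d (f (k * a)) (f (k * b)) (f (k * c)) = gprod d (f a) (f b) (f c) := by
  simp only [gprod, hf]

lemma exists_lipschitz_wordDist (hd : IsPseudoDist d) (hfin : S.Finite)
    (hS : Subgroup.closure S = ⊤) (hf : ∀ k g h, d (f (k * g)) (f (k * h)) = d (f g) (f h)) :
    ∃ C : ℝ, 1 ≤ C ∧ ∀ g h, d (f g) (f h) ≤ C * wordDist S g h := by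
  obtain ⟨C₀, hC₀⟩ := ((hfin.union hfin.inv).image fun a => d (f 1) (f a)).bddAbove
  have hword : ∀ l : List G, IsWord S l → d (f 1) (f l.prod) ≤ max 1 C₀ * l.length := by
    intro l
    induction l with
    | nil => simp [hd.self]
    | cons a l ih =>
      intro hl
      have ha : d (f 1) (f a) ≤ max 1 C₀ := (hC₀ ⟨a, hl a (by simp), rfl⟩).trans (le_max_right _ _)
      have hl' : d (f a) (f (a * l.prod)) ≤ max 1 C₀ * l.length := by
        have := ih fun x hx => hl x (by simp [hx])
        rwa [← hf a 1 l.prod, mul_one] at this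
      calc d (f 1) (f (a :: l).prod) ≤ d (f 1) (f a) + d (f a) (f (a * l.prod)) :=
            hd.triangle _ _ _
        _ ≤ max 1 C₀ * (a :: l).length := by push_cast [List.length_cons]; linarith
  refine ⟨max 1 C₀, le_max_left _ _, fun g h => ?_⟩
  obtain ⟨l, hl, hlen, hprod⟩ := exists_isWord_length_eq_wordLength hS (g⁻¹ * h)
  rw [← dist_map_one_map_inv_mul hf, wordDist, ← hlen, ← hprod]
  exact hword l hl

lemma exists_lt_wordLength_of_not_isQIEmbD (hd : IsPseudoDist d)
    (hf : ∀ k g h, d (f (k * g)) (f (k * h)) = d (f g) (f h)) {C : ℝ}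
    (hC : ∀ g h, d (f g) (f h) ≤ C * wordDist S g h) (hnot : ¬ IsQIEmbD (wordDist S) d f)
    (A : ℝ) : ∃ g, A * (d (f 1) (f g) + 2) < wordLength S g := by
  set k := max C (max A 2)
  have hk2 : 2 ≤ k := (le_max_right A 2).trans (le_max_right _ _)
  simp only [IsQIEmbD, IsQIEmbWith, not_exists, not_and, not_forall] at hnot
  obtain ⟨y, y', hyy'⟩ := hnot k (by linarith)
  have hw : (0 : ℝ) ≤ wordDist S y y' := Nat.cast_nonneg _
  have hlow : d (f y) (f y') < wordDist S y y' / k - k := by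
    by_contra! hle
    exact hyy' hle ((hC y y').trans (by nlinarith [le_max_left C (max A 2)]))
  refine ⟨y⁻¹ * y', ?_⟩
  rw [dist_map_one_map_inv_mul hf]
  have : (d (f y) (f y') + k) * k < wordDist S y y' := by
    rwa [lt_sub_iff_add_lt, lt_div_iff₀ (by linarith)] at hlow
  have hAk : A ≤ k := (le_max_left A 2).trans (le_max_right _ _)
  have hk : A * (d (f y) (f y') + 2) ≤ (d (f y) (f y') + k) * k := by
    nlinarith [hd.nonneg (f y) (f y')]
  exact hk.trans_lt this

lemma exists_far_of_isGeodesicPath (hd : IsPseudoDist d)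
    (hf : ∀ k g h, d (f (k * g)) (f (k * h)) = d (f g) (f h)) {M : ℝ} {K : ℕ}
    (hK : ∀ a, d (f 1) (f a) ≤ 2 * M → wordLength S a ≤ K) {g : G} {γ : ℕ → G}
    (hγ : IsGeodesicPath S g γ) (c : ℕ → X) {L : ℕ}
    (hLK : (L + 1) * (K + 1) ≤ wordLength S g) :
    ∃ i ≤ wordLength S g, ∀ j ≤ L, M < d (f (γ i)) (c j) := by
  by_contra! h
  choose! F hFL hF using h
  have hmn : ∀ m < L + 2, (K + 1) * m ≤ wordLength S g := fun m hm =>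
    (Nat.mul_le_mul_left _ (Nat.lt_succ_iff.1 hm)).trans (by rwa [mul_comm])
  -- two of the `L + 2` points `γ ((K + 1) * m)` are close to the same point of the chain
  obtain ⟨m, hm, m', hm', hne, hFm⟩ := Finset.exists_ne_map_eq_of_card_lt_of_maps_to
    (s := Finset.range (L + 2)) (t := Finset.range (L + 1)) (f := fun m => F ((K + 1) * m))
    (by simp) (fun m hm => by simpa [Nat.lt_succ_iff] using hFL _ (hmn m (by simpa using hm)))
  simp only [Finset.mem_range] at hm hm'
  wlog hlt : m < m' generalizing m m'
  · exact this m' m hne.symm hFm.symm hm' hm (lt_of_le_of_ne (not_lt.1 hlt) hne.symm)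
  have hclose : d (f (γ ((K + 1) * m))) (f (γ ((K + 1) * m'))) ≤ 2 * M := by
    have h1 := hF _ (hmn m hm)
    have h2 := hF _ (hmn m' hm')
    rw [← hFm, hd.comm] at h2
    linarith [hd.triangle (f (γ ((K + 1) * m))) (c (F ((K + 1) * m))) (f (γ ((K + 1) * m')))]
  have hK' := hK _ ((dist_map_one_map_inv_mul hf _ _).trans_le hclose)
  have hdist := hγ.wordDist_eq _ _ (Nat.mul_le_mul_left _ hlt.le) (hmn m' hm')
  rw [wordDist] at hdist
  have hK'' : ((wordLength S ((γ ((K + 1) * m))⁻¹ * γ ((K + 1) * m')) : ℕ) : ℝ) ≤ K := by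
    exact_mod_cast hK'
  have : (m : ℝ) + 1 ≤ m' := by exact_mod_cast hlt
  push_cast at hdist
  nlinarith

end EquivariantMap

section SeparatedPairs

variable {G : Type*} [Group G] {S : Set G} {X : Type*} {d : X → X → ℝ} {f : G → X}

lemma IsGeodesicPath.gprod_inv_eq_zero (hS : Subgroup.closure S = ⊤) {g : G} {γ : ℕ → G}
    (hγ : IsGeodesicPath S g γ) {i : ℕ} (hi : i ≤ wordLength S g) :
    gprod (wordDist S) 1 (γ i)⁻¹ ((γ i)⁻¹ * g) = 0 := by
  have := gprod_map_mul_left (f := id) (wordDist_mul_left (S := S)) (γ i)⁻¹ (γ i) 1 g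
  simp only [id, inv_mul_cancel, mul_one] at this
  rw [this]
  have h1 := hγ.wordDist_eq 0 i (Nat.zero_le i) hi
  have h2 := hγ.wordDist_eq i _ hi le_rfl
  rw [hγ.zero] at h1
  rw [hγ.apply_wordLength] at h2
  simp only [gprod, (isPseudoDist_wordDist hS).comm _ (γ i), wordDist_one_left] at h1 h2 ⊢
  push_cast at h1 h2
  linarith

lemma exists_gprod_le_zero_le_gprod_map (hd : IsPseudoDist d) (hhyp : IsHypD d) (hgeod : IsChainGeodesic d)
    (hfin : S.Finite) (hS : Subgroup.closure S = ⊤)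
    (hf : ∀ k g h, d (f (k * g)) (f (k * h)) = d (f g) (f h))
    (hproper : ∀ R : ℝ, {g : G | d (f 1) (f g) ≤ R}.Finite)
    (hnot : ¬ IsQIEmbD (wordDist S) d f) (M : ℕ) :
    ∃ b c : G, M ≤ wordLength S b ∧ M ≤ wordLength S c ∧ gprod (wordDist S) 1 b c ≤ 0 ∧
      (M : ℝ) ≤ gprod d (f 1) (f b) (f c) := by
  obtain ⟨δ, hδ0, hδ⟩ := hhyp
  obtain ⟨C, hC1, hC⟩ := exists_lipschitz_wordDist hd hfin hS hf
  -- large enough for `C * M ≤ D` and `M ≤ D - 2 * δ - 3`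
  set D := C * (M + 2 * δ + 4)
  have hDM : C * M ≤ D := by nlinarith
  obtain ⟨K, hK⟩ := ((hproper (2 * D)).image (wordLength S)).bddAbove
  obtain ⟨g, hg⟩ := exists_lt_wordLength_of_not_isQIEmbD hd hf hC hnot (K + 1)
  obtain ⟨L, c, hc0, hcL, hL, hc⟩ := hgeod (f 1) (f g)
  obtain ⟨γ, hγ⟩ := exists_isGeodesicPath hS g
  have hLK : (L + 1) * (K + 1) ≤ wordLength S g := by
    have : ((L : ℝ) + 1) * (K + 1) < wordLength S g := by nlinarith
    exact_mod_cast this.le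
  obtain ⟨i, hi, hfar⟩ := exists_far_of_isGeodesicPath hd hf (M := D)
    (fun a ha => hK ⟨a, ha, rfl⟩) hγ c hLK
  have hlong : ∀ a b, D < d (f a) (f b) → M ≤ wordLength S (a⁻¹ * b) := fun a b hab => by
    have : (M : ℝ) < wordDist S a b := by nlinarith [hC a b]
    rw [wordDist] at this
    exact_mod_cast this.le
  refine ⟨(γ i)⁻¹, (γ i)⁻¹ * g, ?_, ?_, ?_, ?_⟩
  · have := hfar 0 (Nat.zero_le L)
    rw [hc0, hd.comm] at this
    simpa [wordLength_inv hS] using hlong _ _ this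
  · exact hlong _ _ (hcL ▸ hfar L le_rfl)
  · exact (hγ.gprod_inv_eq_zero hS hi).le
  · have := gprod_map_mul_left hf (γ i)⁻¹ (γ i) 1 g
    simp only [inv_mul_cancel, mul_one] at this
    rw [this]
    have := sub_le_gprod_of_le_dist_chain hd hδ hc0 hcL hL hc fun j hj => (hfar j hj).le
    nlinarith

end SeparatedPairs

lemma exists_reindex_eventually_eq {α : Type*} {q : ℕ → ℕ → α} {V : ℕ → Set α}
    (hV : ∀ r, (V r).Finite) (hq : ∀ r k, q r k ∈ V r) :
    ∃ (κ : ℕ → ℕ) (v : ℕ → α), (∀ j, j ≤ κ j) ∧ ∀ r j, r ≤ j → q r (κ j) = v r := by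
  -- `v r` is the limit of `q r` along a nonprincipal ultrafilter
  have hlim : ∀ r, ∃ a, ∀ᶠ k in (Filter.hyperfilter ℕ : Filter ℕ), q r k = a := fun r => by
    obtain ⟨a, -, ha⟩ := (Ultrafilter.eventually_exists_mem_iff (P := fun a k => q r k = a)
      (hV r)).1 (Filter.Eventually.of_forall fun k => ⟨q r k, hq r k, rfl⟩)
    exact ⟨a, ha⟩
  choose v hv using hlim
  have hgood : ∀ j, ∃ k, j ≤ k ∧ ∀ r ∈ Set.Iic j, q r k = v r := fun j =>
    (((Filter.eventually_ge_atTop j).filter_mono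
      (Nat.cofinite_eq_atTop ▸ Filter.hyperfilter_le_cofinite)).and
      ((Filter.eventually_all_finite (Set.finite_Iic j)).2 fun r _ => hv r)).exists
  choose κ hκ hκv using hgood
  exact ⟨κ, v, hκ, fun r j hrj => hκv j r hrj⟩

section Boundary

variable {G : Type*} [Group G] {S : Set G}

lemma le_gprod_of_isGeodesicPath (hS : Subgroup.closure S = ⊤) {a b : G} {α β : ℕ → G}
    (ha : IsGeodesicPath S a α) (hb : IsGeodesicPath S b β) {r : ℕ}
    (hra : r ≤ wordLength S a) (hrb : r ≤ wordLength S b) (h : α r = β r) :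
    (r : ℝ) ≤ gprod (wordDist S) 1 a b := by
  have hp : wordDist S 1 (α r) = r := by rw [wordDist_one_left, ha.wordLength_apply hra]
  have hpa := ha.wordDist_eq r _ hra le_rfl
  have hpb := hb.wordDist_eq r _ hrb le_rfl
  rw [ha.apply_wordLength] at hpa
  rw [hb.apply_wordLength, ← h] at hpb
  refine hp ▸ le_gprod_of_dist_add_le (isPseudoDist_wordDist hS) ?_ ?_
  · rw [hp, hpa, wordDist_one_left]; linarith
  · rw [hp, hpb, wordDist_one_left]; linarith

lemma seqToInf_of_prefix_eq (hS : Subgroup.closure S = ⊤) {γ : G → ℕ → G}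
    (hγ : ∀ g, IsGeodesicPath S g (γ g)) {s w : ℕ → G}
    (hw : ∀ r j, r ≤ j → r ≤ wordLength S (s j) ∧ γ (s j) r = w r) :
    SeqToInf (wordDist S) s :=
  seqFellow_of_basepoint (isPseudoDist_wordDist hS) 1 fun M =>
    ⟨⌈M⌉₊, fun m n hm hn => (Nat.le_ceil M).trans <|
      le_gprod_of_isGeodesicPath hS (hγ _) (hγ _) (hw _ m hm).1 (hw _ n hn).1
        ((hw _ m hm).2.trans (hw _ n hn).2.symm)⟩

variable {X : Type*} {d : X → X → ℝ} {f : G → X}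

theorem exists_ne_apply_eq_of_isCTMapD (hd : IsPseudoDist d) (hhyp : IsHypD d)
    (hgeod : IsChainGeodesic d) (hfin : S.Finite) (hS : Subgroup.closure S = ⊤)
    (hGhyp : IsHypD (wordDist S)) (hf : ∀ k g h, d (f (k * g)) (f (k * h)) = d (f g) (f h))
    (hproper : ∀ R : ℝ, {g : G | d (f 1) (f g) ≤ R}.Finite) {bh : Bdry (wordDist S) → Bdry d}
    (hCT : IsCTMapD (wordDist S) d f bh) (hnot : ¬ IsQIEmbD (wordDist S) d f) :
    ∃ ξ₁ ξ₂ : Bdry (wordDist S), ξ₁ ≠ ξ₂ ∧ bh ξ₁ = bh ξ₂ := by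
  choose b c hb hc hbcG hbcX using exists_gprod_le_zero_le_gprod_map hd hhyp hgeod hfin hS hf hproper hnot
  choose γ hγ using exists_isGeodesicPath hS
  have hball := finite_setOf_wordLength_le hfin hS
  obtain ⟨κ, v, hκ, hv⟩ := exists_reindex_eventually_eq (q := fun r k => (γ (b k) r, γ (c k) r))
    (fun r => (hball r).prod (hball r))
    (fun r k => ⟨(hγ _).wordLength_apply_le r, (hγ _).wordLength_apply_le r⟩)
  have hs : SeqToInf (wordDist S) (b ∘ κ) := seqToInf_of_prefix_eq hS hγ fun r j hrj =>
    ⟨hrj.trans ((hκ j).trans (hb _)), congrArg Prod.fst (hv r j hrj)⟩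
  have ht : SeqToInf (wordDist S) (c ∘ κ) := seqToInf_of_prefix_eq hS hγ fun r j hrj =>
    ⟨hrj.trans ((hκ j).trans (hc _)), congrArg Prod.snd (hv r j hrj)⟩
  have hne : Bdry.mk ⟨b ∘ κ, hs⟩ ≠ Bdry.mk ⟨c ∘ κ, ht⟩ := fun h => by
    obtain ⟨N, hN⟩ := seqFellow_of_mk_eq (isPseudoDist_wordDist hS) hGhyp h 1 1
    have : (1 : ℝ) ≤ gprod (wordDist S) 1 (b (κ N)) (c (κ N)) := hN N N le_rfl le_rfl
    linarith [hbcG (κ N)]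
  obtain ⟨hfs, hbs⟩ := hCT.2 _ _ ⟨hs, rfl⟩
  obtain ⟨hft, hbt⟩ := hCT.2 _ _ ⟨ht, rfl⟩
  refine ⟨_, _, hne, hbs.symm.trans (Eq.trans (Quot.sound ?_) hbt)⟩
  exact seqFellow_of_le_gprod hd hhyp hfs (f 1) fun n =>
    (Nat.cast_le.2 (hκ n)).trans (hbcX (κ n))

end Boundary

lemma IsGeodesicMS.isChainGeodesic {X : Type*} [MetricSpace X] (hX : IsGeodesicMS X) :
    IsChainGeodesic (fun a b : X => dist a b) := by
  intro u v
  obtain ⟨γ, hγ0, hγ1, hγ⟩ := hX u v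
  have hmem : ∀ i : ℕ, min (i : ℝ) (dist u v) ∈ Set.Icc 0 (dist u v) := fun i =>
    ⟨le_min (Nat.cast_nonneg i) dist_nonneg, min_le_right _ _⟩
  refine ⟨⌈dist u v⌉₊, fun i => γ (min i (dist u v)), by simpa using hγ0, ?_,
    (Nat.ceil_lt_add_one dist_nonneg).le, fun i j hij _ => ?_⟩
  · simp only [min_eq_right (Nat.le_ceil _), hγ1]
  · dsimp only
    rw [hγ _ (hmem i) _ (hmem j)]
    refine (abs_min_sub_min_le_max _ _ _ _).trans ?_
    rw [sub_self, abs_zero, max_eq_left (abs_nonneg _), abs_sub_comm,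
      abs_of_nonneg (sub_nonneg.2 (Nat.cast_le.2 hij))]

lemma isChainGeodesic_wordDist {G : Type*} [Group G] {S : Set G}
    (hS : Subgroup.closure S = ⊤) : IsChainGeodesic (wordDist S) := by
  intro u v
  obtain ⟨γ, hγ⟩ := exists_isGeodesicPath hS (u⁻¹ * v)
  refine ⟨wordLength S (u⁻¹ * v), fun i => u * γ i, by simp [hγ.zero],
    by simp [hγ.apply_wordLength], by simp [wordDist], fun i j hij hj => ?_⟩
  rw [wordDist_mul_left, hγ.wordDist_eq i j hij hj]

lemma finite_setOf_dist_one_smul_le {G X : Type*} [Monoid G] [PseudoMetricSpace X] [ProperSpace X]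
    [MulAction G X] (hpd : ∀ Kc L : Set X, IsCompact Kc → IsCompact L →
      Set.Finite { g : G | ((g • Kc) ∩ L).Nonempty }) (x : X) (R : ℝ) :
    {g : G | dist ((1 : G) • x) (g • x) ≤ R}.Finite :=
  (hpd {x} (Metric.closedBall x R) isCompact_singleton (isCompact_closedBall x R)).subset
    fun g hg => ⟨g • x, by simp, by simpa [dist_comm] using hg⟩

lemma finite_setOf_wordDist_one_coe_le {G : Type*} [Group G] {S : Set G} (hfin : S.Finite)
    (hS : Subgroup.closure S = ⊤) (H : Subgroup G) (R : ℝ) :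
    {h : H | wordDist S ((1 : H) : G) h ≤ R}.Finite :=
  ((finite_setOf_wordLength_le hfin hS ⌊R⌋₊).preimage Subtype.val_injective.injOn).subset
    fun h hh => Nat.le_floor (by simpa [wordDist_one_left] using hh)

/-- Lemma 3.11(3). Suppose a hyperbolic group `G` (with word metric
w.r.t. a finite generating set `S`) acts properly discontinuously by isometries on a
(proper, geodesic) hyperbolic metric space `X`, `x ∈ X`, and the orbit map
`g ↦ g • x` admits a Cannon–Thurston map `bh`. If the orbit map is not a qi embedding
then `bh` identifies two distinct boundary points. In particular (second conjunct)
the same holds for the Cannon–Thurston map of the inclusion of a hyperbolic subgroup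
`H < G` which is not qi embedded in `G`. -/
theorem stmt_8 {G : Type*} [Group G] {X : Type*} [MetricSpace X] [ProperSpace X]
    (hgeo : IsGeodesicMS X)
    (hXhyp : IsHypD (fun a b : X => dist a b))
    (S : Set G) (hS : GenSet S) (hGhyp : IsHypD (wordDist S))
    [MulAction G X]
    (hiso : ∀ (g : G) (x y : X), dist (g • x) (g • y) = dist x y)
    (hpd : ∀ Kc L : Set X, IsCompact Kc → IsCompact L →
      Set.Finite { g : G | ((g • Kc) ∩ L).Nonempty })
    (x : X)
    (bh : Bdry (wordDist S) → Bdry (fun a b : X => dist a b))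
    (hCT : IsCTMapD (wordDist S) (fun a b : X => dist a b) (fun g : G => g • x) bh)
    (hnotqi : ¬ IsQIEmbD (wordDist S) (fun a b : X => dist a b) (fun g : G => g • x)) :
    (∃ ξ₁ ξ₂ : Bdry (wordDist S), ξ₁ ≠ ξ₂ ∧ bh ξ₁ = bh ξ₂) ∧
    (∀ (H : Subgroup G) (T : Set ↥H), GenSet T → IsHypD (wordDist T) →
      ∀ bi : Bdry (wordDist T) → Bdry (wordDist S),
        IsCTMapD (wordDist T) (wordDist S) (Subtype.val : ↥H → G) bi →
        ¬ IsQIEmbD (wordDist T) (wordDist S) (Subtype.val : ↥H → G) →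
        ∃ ξ₁ ξ₂ : Bdry (wordDist T), ξ₁ ≠ ξ₂ ∧ bi ξ₁ = bi ξ₂) := by
  refine ⟨exists_ne_apply_eq_of_isCTMapD (isPseudoDist_dist X) hXhyp hgeo.isChainGeodesic
    hS.1 hS.2 hGhyp (fun k g h => by simp only [mul_smul, hiso])
    (finite_setOf_dist_one_smul_le hpd x) hCT hnotqi, ?_⟩
  intro H T hT hThyp bi hCTi hnotqii
  exact exists_ne_apply_eq_of_isCTMapD (isPseudoDist_wordDist hS.2) hGhyp
    (isChainGeodesic_wordDist hS.2) hT.1 hT.2 hThyp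
    (fun k g h => by simp only [Subgroup.coe_mul, wordDist_mul_left])
    (finite_setOf_wordDist_one_coe_le hS.1 hS.2 H) hCTi hnotqii
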